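/- Define X̃_{-n} = lim_{j→∞} X_{ζ_j - n} for each n ≥ 0 (the limit exists almost surely since the cells [X_{ζ_j-n}]^j are nested intervals with diameters tending to 0). Then the one-sided process (…, X̃_{-1}, X̃_0) has the same distribution as (…, X_{-1}, X_0). -/

import Mathlib

open MeasureTheory Filter Set

noncomputable section

/-- `Q k x` is the cell of the `k`-th partition containing `x`: a nested sequence of
countable partitions of `ℝ` into intervals whose cells shrink to points. -/
def IsNestedIntervalQuantizer (Q : ℕ → ℝ → Set ℝ) : Prop :=
  (∀ k x, x ∈ Q k x) ∧
  (∀ k x, (Q k x).OrdConnected) ∧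
  (∀ k x y, Q k x = Q k y ∨ Disjoint (Q k x) (Q k y)) ∧
  (∀ k, (Set.range (Q k)).Countable) ∧
  (∀ k x, Q (k + 1) x ⊆ Q k x) ∧
  (∀ x, Filter.Tendsto (fun k => EMetric.diam (Q k x)) Filter.atTop (nhds 0))

/-- Block lengths `l k`: nondecreasing, `1 ≤ l k ≤ k`, tending to infinity. -/
def GoodLengths (l : ℕ → ℕ) : Prop :=
  Monotone l ∧ (∀ k, 1 ≤ l k) ∧ (∀ k, 1 ≤ k → l k ≤ k) ∧
    Filter.Tendsto l Filter.atTop Filter.atTop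

/-- Two-sided stationarity of a real valued process. -/
def IsStationaryReal {Ω : Type*} [MeasurableSpace Ω] (μ : Measure Ω) (X : ℤ → Ω → ℝ) : Prop :=
  Measure.map (fun ω (n : ℤ) => X (n + 1) ω) μ = Measure.map (fun ω (n : ℤ) => X n ω) μ

variable {Ω : Type*}

/-- `recEta Q l X k b ω` is the waiting time for the next recurrence of the `P_k`-quantized
block of length `l k` ending at position `b`. -/
def recEta (Q : ℕ → ℝ → Set ℝ) (l : ℕ → ℕ) (X : ℤ → Ω → ℝ) (k : ℕ) (b : ℤ) (ω : Ω) : ℕ :=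
  sInf {t : ℕ | 0 < t ∧ ∀ i < l k, Q k (X (b + t - i) ω) = Q k (X (b - i) ω)}

/-- The stopping times `ζ_k` defined by quantized block recurrence. -/
def recZeta (Q : ℕ → ℝ → Set ℝ) (l : ℕ → ℕ) (X : ℤ → Ω → ℝ) : ℕ → Ω → ℤ
  | 0, _ => 0
  | k + 1, ω => recZeta Q l X k ω + recEta Q l X (k + 1) (recZeta Q l X k ω) ω

/-- The σ-field `σ(X_0^{ζ})` generated by the data segment `X_0, …, X_ζ`. -/
def sigmaSeg [MeasurableSpace Ω] (X : ℤ → Ω → ℝ) (ζ : Ω → ℤ) : MeasurableSpace Ω :=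
  MeasurableSpace.comap
    (fun ω => (ζ ω, fun n : ℕ => if (n : ℤ) ≤ ζ ω then X n ω else 0)) inferInstance

/-- The σ-field `σ(X_{-∞}^{ζ})` generated by the whole past up to time `ζ`. -/
def sigmaPastAt [MeasurableSpace Ω] (X : ℤ → Ω → ℝ) (ζ : Ω → ℤ) : MeasurableSpace Ω :=
  MeasurableSpace.comap (fun ω => (ζ ω, fun n : ℕ => X (ζ ω - n) ω)) inferInstance

/-- The σ-field `σ(X_{-∞}^{0})` of the infinite past. -/
def sigmaPast [MeasurableSpace Ω] (X : ℤ → Ω → ℝ) : MeasurableSpace Ω :=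
  MeasurableSpace.comap (fun ω => fun n : ℕ => X (-(n : ℤ)) ω) inferInstance

/-- The metric `d*` on one-sided sequences `(…, x_{-1}, x_0)`, with `x i` standing
for the coordinate `x_{-i}`. -/
def dstar (x y : ℕ → ℝ) : ℝ :=
  ∑' i : ℕ, (1 / 2 ^ (i + 1)) * (|x i - y i| / (1 + |x i - y i|))

/-- Continuity of `e` on the set `C` with respect to the metric `d*`. -/
def DStarContinuousOn (e : (ℕ → ℝ) → ℝ) (C : Set (ℕ → ℝ)) : Prop :=
  ∀ x ∈ C, ∀ ε > 0, ∃ δ > 0, ∀ y ∈ C, dstar x y < δ → |e y - e x| < ε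

end

/-!
The path `(X_n)` has a shift-invariant law `ν` on `ℤ → ℝ`. Shifting a path to the first return
time of its quantized block preserves `ν`: by Poincaré recurrence the forward and the backward
return times are a.e. finite, and the shift by `t` carries the paths with forward return time `t`
bijectively onto those with backward return time `t`. Since `ζ_j` is a composition of such return
shifts, the past seen from `ζ_j` has the law of the past seen from `0` for every `j`, and the almost
sure limit `X̃` of these pasts inherits that law.
-/

theorem Nat.sInf_eq_iff {S : Set ℕ} {n : ℕ} :
    sInf S = n ↔ (n ∈ S ∧ ∀ m < n, m ∉ S) ∨ (n = 0 ∧ ∀ m, m ∉ S) := by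
  constructor
  · rintro rfl
    rcases S.eq_empty_or_nonempty with hS | hS
    · simp [hS]
    · exact .inl ⟨Nat.sInf_mem hS, fun m => Nat.notMem_of_lt_sInf⟩
  · rintro (⟨hnS, hmin⟩ | ⟨rfl, hS⟩)
    · exact le_antisymm (Nat.sInf_le hnS) (not_lt.1 fun h => hmin _ h (Nat.sInf_mem ⟨n, hnS⟩))
    · simp [Set.eq_empty_of_forall_notMem hS]

section FirstReturn

variable {α ι : Type*} {T : ℤ → α → α} {κ : α → ι}

/-- Equal to `0` when the orbit of `y` never returns to the class `κ y`. -/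
noncomputable def firstReturnTime (T : ℤ → α → α) (κ : α → ι) (y : α) : ℕ :=
  sInf {t : ℕ | 0 < t ∧ κ (T t y) = κ y}

theorem flow_one_iterate_apply (hadd : ∀ a b x, T a (T b x) = T (a + b) x)
    (hzero : ∀ x, T 0 x = x) (n : ℕ) (y : α) : (T 1)^[n] y = T n y := by
  induction n with
  | zero => simp [hzero]
  | succ n ih => rw [Function.iterate_succ_apply', ih, hadd, Nat.cast_succ, add_comm]

theorem firstReturnTime_eq_iff_reverse (hadd : ∀ a b x, T a (T b x) = T (a + b) x)
    (hzero : ∀ x, T 0 x = x) {y : α} {t : ℕ} (ht : 0 < t) :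
    firstReturnTime T κ y = t ↔ firstReturnTime (fun z => T (-z)) κ (T t y) = t := by
  simp only [firstReturnTime, Nat.sInf_eq_iff, ht.ne', false_and, or_false, mem_ofPred_eq, hadd,
    neg_add_cancel, hzero, ht, true_and, not_and]
  constructor <;> rintro ⟨hret, hmin⟩ <;> refine ⟨hret.symm, fun m hm hm0 heq => ?_⟩
  · refine hmin (t - m) (by omega) (by omega) ?_
    rwa [show ((t - m : ℕ) : ℤ) = -m + t by omega, ← hret]
  · refine hmin (t - m) (by omega) (by omega) ?_
    rwa [show -((t - m : ℕ) : ℤ) + t = m by omega, ← hret]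

variable [MeasurableSpace α] {ν : Measure α}

theorem measurable_sInf_setOf {p : α → ℕ → Prop} (hp : ∀ t, MeasurableSet {a | p a t}) :
    Measurable fun a => sInf {t | p a t} := by
  refine measurable_to_countable' fun n => ?_
  simp only [preimage, mem_singleton_iff, Nat.sInf_eq_iff, mem_ofPred_eq, ofPred_or, ofPred_and,
    ofPred_forall]
  measurability

theorem tsum_measure_preimage_singleton_inter {β : Type*} [Countable β] {g : α → β}
    (hg : ∀ b, MeasurableSet (g ⁻¹' {b})) (S : Set α) : ∑' b, ν (g ⁻¹' {b} ∩ S) = ν S := by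
  have := tsum_measure_preimage_singleton (μ := ν.restrict S) countable_univ fun b _ => hg b
  rw [tsum_univ fun b => ν.restrict S (g ⁻¹' {b}), preimage_univ,
    Measure.restrict_apply_univ] at this
  simpa only [Measure.restrict_apply (hg _)] using this

theorem measurableSet_setOf_comp_eq (hκ : ∀ i, MeasurableSet (κ ⁻¹' {i}))
    (hrange : (range κ).Countable) {f : α → α} (hf : Measurable f) :
    MeasurableSet {y | κ (f y) = κ y} := by
  have : {y | κ (f y) = κ y} = ⋃ i ∈ range κ, f ⁻¹' (κ ⁻¹' {i}) ∩ κ ⁻¹' {i} := by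
    ext y
    simp only [mem_ofPred_eq, mem_iUnion, mem_inter_iff, mem_preimage, mem_singleton_iff,
      exists_prop, exists_range_iff]
    exact ⟨fun h => ⟨y, h, rfl⟩, fun ⟨_, h, h'⟩ => h.trans h'.symm⟩
  rw [this]
  exact .biUnion hrange fun i _ => (hf (hκ i)).inter (hκ i)

theorem measurable_firstReturnTime (hT : ∀ z, Measurable (T z))
    (hκ : ∀ i, MeasurableSet (κ ⁻¹' {i})) (hrange : (range κ).Countable) :
    Measurable (firstReturnTime T κ) :=
  measurable_sInf_setOf fun t => by
    simp only [ofPred_and]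
    exact (MeasurableSet.const _).inter (measurableSet_setOf_comp_eq hκ hrange (hT t))

theorem MeasureTheory.Conservative.ae_exists_pos_iterate_eq {f : α → α}
    (hf : Conservative f ν) (hκ : ∀ i, MeasurableSet (κ ⁻¹' {i}))
    (hrange : (range κ).Countable) : ∀ᵐ y ∂ν, ∃ n, 0 < n ∧ κ (f^[n] y) = κ y := by
  have := (ae_ball_iff hrange).2 fun i _ =>
    hf.ae_mem_imp_frequently_image_mem (hκ i).nullMeasurableSet
  filter_upwards [this] with y hy
  obtain ⟨n, hn, hmem⟩ := frequently_atTop.1 (hy (κ y) (mem_range_self y) rfl) 1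
  exact ⟨n, hn, hmem⟩

theorem measurePreserving_flow_of_one (hmeas : ∀ z, Measurable (T z))
    (hadd : ∀ a b x, T a (T b x) = T (a + b) x) (hzero : ∀ x, T 0 x = x)
    (h1 : MeasurePreserving (T 1) ν ν) (z : ℤ) : MeasurePreserving (T z) ν ν := by
  have hneg : MeasurePreserving (T (-1)) ν ν := by
    refine ⟨hmeas _, ?_⟩
    conv_lhs => rw [← h1.map_eq]
    rw [Measure.map_map (hmeas _) (hmeas _)]
    simp [Function.comp_def, hadd, hzero]
  obtain ⟨n, rfl | rfl⟩ := Int.eq_nat_or_neg z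
  · simpa [funext (flow_one_iterate_apply hadd hzero n)] using h1.iterate n
  · have := flow_one_iterate_apply (T := fun z => T (-z))
      (fun a b x => by simp only [hadd, neg_add]) (by simp [hzero])
    simpa [funext (this n)] using hneg.iterate n

theorem ae_pos_firstReturnTime [IsFiniteMeasure ν] (hadd : ∀ a b x, T a (T b x) = T (a + b) x)
    (hzero : ∀ x, T 0 x = x) (h1 : MeasurePreserving (T 1) ν ν)
    (hκ : ∀ i, MeasurableSet (κ ⁻¹' {i})) (hrange : (range κ).Countable) :
    ∀ᵐ y ∂ν, 0 < firstReturnTime T κ y := by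
  filter_upwards [h1.conservative.ae_exists_pos_iterate_eq hκ hrange] with y ⟨n, hn, hret⟩
  rw [flow_one_iterate_apply hadd hzero] at hret
  have : {t : ℕ | 0 < t ∧ κ (T t y) = κ y}.Nonempty := ⟨n, hn, hret⟩
  exact (Nat.sInf_mem this).1

theorem measurePreserving_firstReturnShift [IsFiniteMeasure ν]
    (hT : ∀ z, MeasurePreserving (T z) ν ν) (hadd : ∀ a b x, T a (T b x) = T (a + b) x)
    (hzero : ∀ x, T 0 x = x) (hκ : ∀ i, MeasurableSet (κ ⁻¹' {i}))
    (hrange : (range κ).Countable) :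
    MeasurePreserving (fun y => T (firstReturnTime T κ y) y) ν ν := by
  set η := firstReturnTime T κ
  set η' := firstReturnTime (fun z => T (-z)) κ
  have hadd' : ∀ a b x, T (-a) (T (-b) x) = T (-(a + b)) x := fun a b x => by
    rw [hadd, neg_add]
  have hη : ∀ t, MeasurableSet (η ⁻¹' {t}) := fun t =>
    measurable_firstReturnTime (fun z => (hT z).measurable) hκ hrange (measurableSet_singleton t)
  have hη' : ∀ t, MeasurableSet (η' ⁻¹' {t}) := fun t =>
    measurable_firstReturnTime (fun z => (hT (-z)).measurable) hκ hrange
      (measurableSet_singleton t)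
  have hnull : ν (η ⁻¹' {0}) = 0 := by
    refine measure_eq_zero_iff_ae_notMem.2 ?_
    filter_upwards [ae_pos_firstReturnTime hadd hzero (hT 1) hκ hrange] with y hy
    exact hy.ne'
  have hnull' : ν (η' ⁻¹' {0}) = 0 := by
    refine measure_eq_zero_iff_ae_notMem.2 ?_
    filter_upwards [ae_pos_firstReturnTime hadd' (by simpa using hzero) (hT (-1)) hκ hrange]
      with y hy
    exact hy.ne'
  have hfiber : ∀ t B, MeasurableSet B → ν (η ⁻¹' {t} ∩ T t ⁻¹' B) = ν (η' ⁻¹' {t} ∩ B) := by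
    rintro (_ | t) B hB
    · rw [measure_mono_null inter_subset_left hnull, measure_mono_null inter_subset_left hnull']
    · rw [← (hT (t + 1 : ℕ)).measure_preimage ((hη' _).inter hB).nullMeasurableSet]
      congr 1
      ext y
      simp [firstReturnTime_eq_iff_reverse hadd hzero (Nat.succ_pos t), η, η']
  have hmeas : Measurable fun y => T (η y) y :=
    (measurable_from_prod_countable_left (f := fun p : α × ℕ => T p.2 p.1) fun t =>
      (hT t).measurable).comp
      (measurable_id.prodMk (measurable_firstReturnTime (fun z => (hT z).measurable) hκ hrange))
  refine ⟨hmeas, Measure.ext fun B hB => ?_⟩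
  rw [Measure.map_apply hmeas hB]
  calc ν ((fun y => T (η y) y) ⁻¹' B) = ∑' t, ν (η ⁻¹' {t} ∩ T t ⁻¹' B) := by
        rw [← tsum_measure_preimage_singleton_inter hη]
        congr 1; ext t; congr 1; ext y
        simp +contextual [and_congr_right_iff]
    _ = ∑' t, ν (η' ⁻¹' {t} ∩ B) := by simp_rw [hfiber _ B hB]
    _ = ν B := tsum_measure_preimage_singleton_inter hη' B

end FirstReturn

section Sequences

variable {β : Type*}

def seqShift (z : ℤ) (y : ℤ → β) : ℤ → β := fun n => y (n + z)

@[simp]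
theorem seqShift_apply (z : ℤ) (y : ℤ → β) (n : ℤ) : seqShift z y n = y (n + z) := rfl

theorem seqShift_seqShift (a b : ℤ) (y : ℤ → β) : seqShift a (seqShift b y) = seqShift (a + b) y :=
  funext fun n => by simp [add_assoc]

theorem seqShift_zero (y : ℤ → β) : seqShift 0 y = y := funext fun _ => by simp

theorem measurable_seqShift [MeasurableSpace β] (z : ℤ) : Measurable (seqShift (β := β) z) :=
  measurable_pi_lambda _ fun _ => measurable_pi_apply _

theorem IsStationaryReal.measurePreserving_seqShift {Ω : Type*} [MeasurableSpace Ω]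
    {μ : Measure Ω} {X : ℤ → Ω → ℝ} (hstat : IsStationaryReal μ X)
    (hX : ∀ n, Measurable (X n)) (z : ℤ) :
    MeasurePreserving (seqShift z) (μ.map fun ω n => X n ω) (μ.map fun ω n => X n ω) := by
  refine measurePreserving_flow_of_one measurable_seqShift seqShift_seqShift seqShift_zero
    ⟨measurable_seqShift 1, ?_⟩ z
  rw [Measure.map_map (measurable_seqShift 1) (measurable_pi_lambda _ hX)]
  exact hstat

end Sequences

section Quantizer

variable {Q : ℕ → ℝ → Set ℝ}

theorem IsNestedIntervalQuantizer.measurableSet_setOf_eq (hQ : IsNestedIntervalQuantizer Q)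
    (k : ℕ) (C : Set ℝ) : MeasurableSet {x | Q k x = C} := by
  by_cases hC : ∃ w, Q k w = C
  · obtain ⟨w, rfl⟩ := hC
    have : {x | Q k x = Q k w} = Q k w := by
      ext x
      refine ⟨fun h => h ▸ hQ.1 k x, fun hx => ?_⟩
      exact (hQ.2.2.1 k x w).resolve_right fun h => h.notMem_of_mem_left (hQ.1 k x) hx
    rw [this]
    exact (hQ.2.1 k w).measurableSet
  · simp only [not_exists] at hC
    simp [hC]

def blockCells (Q : ℕ → ℝ → Set ℝ) (k L : ℕ) (y : ℤ → ℝ) : Fin L → Set ℝ :=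
  fun i => Q k (y (-i))

theorem IsNestedIntervalQuantizer.countable_range_blockCells (hQ : IsNestedIntervalQuantizer Q)
    (k L : ℕ) : (range (blockCells Q k L)).Countable :=
  (countable_pi fun _ => hQ.2.2.2.1 k).mono <| by
    rintro _ ⟨y, rfl⟩ i
    exact mem_range_self _

theorem IsNestedIntervalQuantizer.measurableSet_blockCells_preimage
    (hQ : IsNestedIntervalQuantizer Q) (k L : ℕ) (c : Fin L → Set ℝ) :
    MeasurableSet (blockCells Q k L ⁻¹' {c}) := by
  have : blockCells Q k L ⁻¹' {c}
      = ⋂ i : Fin L, (fun y : ℤ → ℝ => y (-(i : ℕ))) ⁻¹' {x | Q k x = c i} := by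
    ext y
    simp [blockCells, funext_iff]
  rw [this]
  exact .iInter fun i => measurable_pi_apply _ (hQ.measurableSet_setOf_eq k (c i))

end Quantizer

section Recurrence

variable {Q : ℕ → ℝ → Set ℝ} {l : ℕ → ℕ}

def coordProcess : ℤ → (ℤ → ℝ) → ℝ := fun n y => y n

theorem recEta_coordProcess (k : ℕ) (b : ℤ) (y : ℤ → ℝ) :
    recEta Q l coordProcess k b y
      = firstReturnTime seqShift (blockCells Q k (l k)) (seqShift b y) := by
  unfold recEta firstReturnTime
  congr 1
  ext t
  simp only [blockCells, coordProcess, seqShift_apply, funext_iff, Fin.forall_iff,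
    mem_ofPred_eq, and_congr_right_iff]
  refine fun _ => forall₂_congr fun i _ => ?_
  rw [show b + t - i = -i + t + b by ring, sub_eq_neg_add]

theorem recZeta_eq_recZeta_coordProcess {Ω : Type*} (X : ℤ → Ω → ℝ) (j : ℕ) (ω : Ω) :
    recZeta Q l X j ω = recZeta Q l coordProcess j (fun n => X n ω) := by
  induction j with
  | zero => rfl
  | succ j ih => simp only [recZeta, ih]; rfl

noncomputable def zetaShift (Q : ℕ → ℝ → Set ℝ) (l : ℕ → ℕ) (j : ℕ) (y : ℤ → ℝ) : ℤ → ℝ :=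
  seqShift (recZeta Q l coordProcess j y) y

theorem zetaShift_succ (j : ℕ) (y : ℤ → ℝ) :
    zetaShift Q l (j + 1) y
      = seqShift (firstReturnTime seqShift (blockCells Q (j + 1) (l (j + 1))) (zetaShift Q l j y))
          (zetaShift Q l j y) := by
  simp only [zetaShift, recZeta, recEta_coordProcess, seqShift_seqShift, add_comm]

theorem measurePreserving_zetaShift (hQ : IsNestedIntervalQuantizer Q) {ν : Measure (ℤ → ℝ)}
    [IsFiniteMeasure ν] (hν : ∀ z, MeasurePreserving (seqShift z) ν ν) (j : ℕ) :
    MeasurePreserving (zetaShift Q l j) ν ν := by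
  induction j with
  | zero =>
    rw [show zetaShift Q l 0 = id from funext seqShift_zero]
    exact MeasurePreserving.id ν
  | succ j ih =>
    rw [show zetaShift Q l (j + 1) = _ from funext (zetaShift_succ j)]
    exact (measurePreserving_firstReturnShift hν seqShift_seqShift seqShift_zero
      (hQ.measurableSet_blockCells_preimage _ _) (hQ.countable_range_blockCells _ _)).comp ih

end Recurrence

theorem map_eq_of_ae_tendsto_of_forall_map_eq {Ω E ι : Type*} [MeasurableSpace Ω]
    [TopologicalSpace E] [MeasurableSpace E] [HasOuterApproxClosed E] [BorelSpace E]
    {μ : Measure Ω} [IsProbabilityMeasure μ] {l : Filter ι} [l.NeBot] [l.IsCountablyGenerated]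
    {Y : ι → Ω → E} {Z W : Ω → E} (hY : ∀ i, AEMeasurable (Y i) μ) (hZ : AEMeasurable Z μ)
    (hW : AEMeasurable W μ) (hlim : ∀ᵐ ω ∂μ, Tendsto (fun i => Y i ω) l (nhds (Z ω)))
    (hlaw : ∀ i, μ.map (Y i) = μ.map W) : μ.map Z = μ.map W :=
  tendstoInDistribution_unique Y (tendstoInDistribution_of_ae_tendsto hY hZ hlim)
    { forall_aemeasurable := hY
      aemeasurable_limit := hW
      tendsto := by
        refine (tendsto_congr fun i => ?_).2 tendsto_const_nhds
        exact Subtype.ext (hlaw i) }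

theorem intermittent_limit_past_same_distribution_general
    {Ω : Type*} [MeasurableSpace Ω] (μ : Measure Ω) [IsProbabilityMeasure μ]
    (X : ℤ → Ω → ℝ) (hXmeas : ∀ n, Measurable (X n)) (hstat : IsStationaryReal μ X)
    (Q : ℕ → ℝ → Set ℝ) (hQ : IsNestedIntervalQuantizer Q)
    (l : ℕ → ℕ) (Xtilde : ℕ → Ω → ℝ) (hXtmeas : ∀ n, Measurable (Xtilde n))
    (hXtlim : ∀ᵐ ω ∂μ, ∀ n : ℕ,
      Filter.Tendsto (fun j => X (recZeta Q l X j ω - n) ω) Filter.atTop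
        (nhds (Xtilde n ω))) :
    Measure.map (fun ω => fun n : ℕ => Xtilde n ω) μ
      = Measure.map (fun ω => fun n : ℕ => X (-(n : ℤ)) ω) μ := by
  set path : Ω → ℤ → ℝ := fun ω n => X n ω
  have hpath : Measurable path := measurable_pi_lambda _ hXmeas
  have hpast : Measurable fun (y : ℤ → ℝ) (n : ℕ) => y (-n) :=
    measurable_pi_lambda _ fun n => measurable_pi_apply _
  have hζ : ∀ j, MeasurePreserving (zetaShift Q l j) (μ.map path) (μ.map path) :=
    measurePreserving_zetaShift hQ (hstat.measurePreserving_seqShift hXmeas)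
  have hfac : ∀ j, (fun ω (n : ℕ) => X (recZeta Q l X j ω - n) ω)
      = (fun (y : ℤ → ℝ) (n : ℕ) => y (-n)) ∘ zetaShift Q l j ∘ path := by
    intro j
    funext ω n
    simp only [Function.comp_apply, zetaShift, seqShift_apply, path,
      recZeta_eq_recZeta_coordProcess X j ω, sub_eq_neg_add]
  refine map_eq_of_ae_tendsto_of_forall_map_eq (l := atTop)
    (Y := fun j ω (n : ℕ) => X (recZeta Q l X j ω - n) ω) (fun j => ?_)
    (measurable_pi_lambda _ hXtmeas).aemeasurable (hpast.comp hpath).aemeasurable ?_ fun j => ?_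
  · rw [hfac]
    exact (hpast.comp ((hζ j).measurable.comp hpath)).aemeasurable
  · filter_upwards [hXtlim] with ω h using tendsto_pi_nhds.2 h
  · rw [hfac j, ← Measure.map_map hpast ((hζ j).measurable.comp hpath),
      ← Measure.map_map (hζ j).measurable hpath, (hζ j).map_eq, Measure.map_map hpast hpath]
    rfl

/-- The limiting past `X̃_{-n} = lim_j X_{ζ_j − n}` has the same distribution as the
original one-sided past `(…, X_{-1}, X_0)` (coordinate `n` stands for index `-n`). -/
theorem intermittent_limit_past_same_distribution
    {Ω : Type*} [MeasurableSpace Ω] (μ : Measure Ω) [IsProbabilityMeasure μ]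
    (X : ℤ → Ω → ℝ) (hXmeas : ∀ n, Measurable (X n)) (hstat : IsStationaryReal μ X)
    (Q : ℕ → ℝ → Set ℝ) (hQ : IsNestedIntervalQuantizer Q)
    (l : ℕ → ℕ) (hl : GoodLengths l)
    (Xtilde : ℕ → Ω → ℝ) (hXtmeas : ∀ n, Measurable (Xtilde n))
    (hXtlim : ∀ᵐ ω ∂μ, ∀ n : ℕ,
      Filter.Tendsto (fun j => X (recZeta Q l X j ω - n) ω) Filter.atTop
        (nhds (Xtilde n ω))) :
    Measure.map (fun ω => fun n : ℕ => Xtilde n ω) μ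
      = Measure.map (fun ω => fun n : ℕ => X (-(n : ℤ)) ω) μ :=
  intermittent_limit_past_same_distribution_general μ X hXmeas hstat Q hQ l Xtilde hXtmeas hXtlim
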